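/- Let X be a Banach space with SG(X) < 𝔭, where 𝔭 is the pseudo-intersection number. Then X has property (K). -/

import Mathlib

open NormedSpace Filter

/-- A set is weakly compact if it is compact in the weak topology. -/
def IsWeaklyCompact {X : Type*} [NormedAddCommGroup X] [NormedSpace ℝ X] (L : Set X) : Prop :=
  IsCompact (toWeakSpace ℝ X '' L)

/-- Weak* convergence of a sequence of functionals. -/
def WStarTendsto {X : Type*} [NormedAddCommGroup X] [NormedSpace ℝ X]
    (f : ℕ → StrongDual ℝ X) (g : StrongDual ℝ X) : Prop :=
  ∀ x : X, Tendsto (fun n => f n x) atTop (nhds (g x))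

/-- Convergence in the Mackey topology μ(X*,X): uniform convergence on every
weakly compact subset of X. -/
def MackeyTendsto {X : Type*} [NormedAddCommGroup X] [NormedSpace ℝ X]
    (f : ℕ → StrongDual ℝ X) (g : StrongDual ℝ X) : Prop :=
  ∀ L : Set X, IsWeaklyCompact L → ∀ ε : ℝ, 0 < ε →
    ∀ᶠ n in atTop, ∀ x ∈ L, |f n x - g x| < ε

/-- `y` is a convex block subsequence of `x`. -/
def IsConvexBlock {E : Type*} [AddCommGroup E] [Module ℝ E] (x y : ℕ → E) : Prop :=
  ∃ (I : ℕ → Finset ℕ) (a : ℕ → ℝ),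
    (∀ k, (I k).Nonempty) ∧
    (∀ k m m', m ∈ I k → m' ∈ I (k + 1) → m < m') ∧
    (∀ n, 0 ≤ a n) ∧
    (∀ k, ∑ n ∈ I k, a n = 1) ∧
    (∀ k, y k = ∑ n ∈ I k, a n • x n)

/-- Property (K): every weak*-convergent sequence in the dual admits a convex block
subsequence converging in the Mackey topology. -/
def PropertyK (X : Type*) [NormedAddCommGroup X] [NormedSpace ℝ X] : Prop :=
  ∀ (f : ℕ → StrongDual ℝ X) (g : StrongDual ℝ X), WStarTendsto f g →
    ∃ (y : ℕ → StrongDual ℝ X) (h : StrongDual ℝ X), IsConvexBlock f y ∧ MackeyTendsto y h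

/-- A family of sets strongly generates X if every weakly compact set is contained in
G + εB_X for some member G of the family. -/
def StronglyGenerates {X : Type*} [NormedAddCommGroup X] [NormedSpace ℝ X]
    (𝒢 : Set (Set X)) : Prop :=
  ∀ L : Set X, IsWeaklyCompact L → ∀ ε : ℝ, 0 < ε →
    ∃ G ∈ 𝒢, ∀ x ∈ L, ∃ g ∈ G, ‖x - g‖ ≤ ε

/-- SG(X): the least cardinality of a family of weakly compact subsets of X which
strongly generates X. -/
noncomputable def SG (X : Type*) [NormedAddCommGroup X] [NormedSpace ℝ X] : Cardinal :=
  sInf { c : Cardinal | ∃ 𝒢 : Set (Set X), (∀ G ∈ 𝒢, IsWeaklyCompact G) ∧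
    StronglyGenerates 𝒢 ∧ Cardinal.mk 𝒢 = c }

/-- The pseudo-intersection number 𝔭: the least cardinality of a family of infinite
subsets of ℕ with the finite intersection property (all finite intersections infinite)
but with no infinite pseudo-intersection. -/
noncomputable def pseudoIntersectionNumber : Cardinal :=
  sInf { c : Cardinal | ∃ M : Set (Set ℕ),
    (∀ A ∈ M, A.Infinite) ∧
    (∀ F : Finset (Set ℕ), ↑F ⊆ M → Set.Infinite (⋂ A ∈ F, A)) ∧
    (¬ ∃ A : Set ℕ, A.Infinite ∧ ∀ B ∈ M, (A \ B).Finite) ∧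
    Cardinal.mk M = c }

/-!
Let `fₙ → g` weak*, so that `‖fₙ - g‖ ≤ C` by Banach–Steinhaus. On a weakly compact set `W`,
viewed as a compact Hausdorff space in the weak topology, the functions `|fₙ - g|` are bounded
and tend to `0` pointwise. Separating the ball of `C(W)` from the functions that dominate a
convex combination of them gives a positive functional, i.e. (Riesz–Markov–Kakutani) a measure,
under which `∫ |fₙ - g| → 0` by dominated convergence; hence some convex combination of
arbitrarily late `fₙ - g` is uniformly small on `W`, and its weights may be taken rational.

Now take a strongly generating family `𝒢` of weakly compact sets with `|𝒢| = SG(X) < 𝔭`. The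
sets `B(G, k)` of rational convex blocks supported in `[k, ∞)` and `1/(k+1)`-small on `G ∈ 𝒢`
are fewer than `𝔭` subsets of a countable set, and finitely many of them always meet in an
infinite set (apply the first paragraph to a finite union of members of `𝒢`). A
pseudo-intersection provides a sequence of blocks lying eventually in every `B(G, k)`; a
subsequence with successive supports is a convex block subsequence of `(fₙ)` converging to `g`
uniformly on each `G ∈ 𝒢`, hence, by strong generation and the bound `C`, on every weakly
compact set.
-/

universe u

open Topology

section PseudoIntersection

theorem exists_pseudoIntersection_of_countable {M : Set (Set ℕ)} (hM : M.Countable)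
    (hfip : ∀ F : Finset (Set ℕ), ↑F ⊆ M → (⋂ A ∈ F, A).Infinite) :
    ∃ A : Set ℕ, A.Infinite ∧ ∀ B ∈ M, (A \ B).Finite := by
  let l := generate M ⊓ cofinite
  have : (generate M).IsCountablyGenerated := ⟨⟨M, hM, rfl⟩⟩
  have : l.IsCountablyGenerated := by simp only [l, Nat.cofinite_eq_atTop]; infer_instance
  have : l.NeBot := by
    refine inf_neBot_iff.2 fun p hp q hq => ?_
    obtain ⟨t, htM, ht, htp⟩ := mem_generate_iff.1 hp
    have hinf : (⋂₀ t).Infinite := by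
      simpa [Set.sInter_eq_biInter] using hfip ht.toFinset (by simpa using htM)
    exact ((hinf.sdiff hq).mono (Set.sdiff_subset_sdiff_left htp)).nonempty.mono
      fun x hx => ⟨hx.1, not_not.1 hx.2⟩
  obtain ⟨x, hx⟩ := l.exists_seq_tendsto
  refine ⟨Set.range x, fun hfin => ?_, fun B hB => ?_⟩
  · obtain ⟨n, hn⟩ := ((hx.mono_right inf_le_right).eventually hfin.compl_mem_cofinite).exists
    exact hn ⟨n, rfl⟩
  · obtain ⟨N, hN⟩ := eventually_atTop.1
      ((hx.mono_right inf_le_left).eventually (mem_generate_of_mem hB))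
    refine ((Set.finite_Iio N).image x).subset ?_
    rintro _ ⟨⟨n, rfl⟩, hn⟩
    exact ⟨n, lt_of_not_ge fun h => hn (hN n h), rfl⟩

theorem exists_pseudoIntersection_of_mk_lt {M : Set (Set ℕ)} (hinf : ∀ A ∈ M, A.Infinite)
    (hfip : ∀ F : Finset (Set ℕ), ↑F ⊆ M → (⋂ A ∈ F, A).Infinite)
    (hM : Cardinal.mk M < pseudoIntersectionNumber) :
    ∃ A : Set ℕ, A.Infinite ∧ ∀ B ∈ M, (A \ B).Finite := by
  by_contra hnot
  exact hM.not_ge (csInf_le' ⟨M, hinf, hfip, hnot, rfl⟩)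

theorem aleph0_lt_pseudoIntersectionNumber (h : pseudoIntersectionNumber ≠ 0) :
    Cardinal.aleph0 < pseudoIntersectionNumber := by
  rw [pseudoIntersectionNumber] at h ⊢
  obtain ⟨M, -, hfip, hnot, hM⟩ :=
    csInf_mem (Set.nonempty_iff_ne_empty.2 fun he => h (Cardinal.sInf_eq_zero_iff.2 (.inl he)))
  rw [← hM]
  by_contra! hle
  exact hnot (exists_pseudoIntersection_of_countable
    (Set.countable_coe_iff.1 (Cardinal.mk_le_aleph0_iff.1 hle)) hfip)

theorem mk_prod_nat_lt_pseudoIntersectionNumber {ι : Type u}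
    (h : Cardinal.mk ι < Cardinal.lift.{u} pseudoIntersectionNumber) :
    Cardinal.mk (ι × ℕ) < Cardinal.lift.{u} pseudoIntersectionNumber := by
  have hℵ : Cardinal.aleph0 < Cardinal.lift.{u} pseudoIntersectionNumber := by
    simpa using aleph0_lt_pseudoIntersectionNumber fun h0 => by simp [h0] at h
  simpa using Cardinal.mul_lt_of_lt hℵ.le h hℵ

theorem exists_seq_eventually_mem_of_mk_lt {ι : Type u} {α : Type*} [Countable α]
    (B : ι → Set α) (hB : ∀ s : Finset ι, (⋂ i ∈ s, B i).Infinite)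
    (hι : Cardinal.mk ι < Cardinal.lift.{u} pseudoIntersectionNumber) :
    ∃ v : ℕ → α, ∀ i, ∀ᶠ n in atTop, v n ∈ B i := by
  classical
  have : Infinite α := Set.infinite_univ_iff.1 (by simpa using hB ∅)
  let _ := (nonempty_denumerable α).some
  let e := Denumerable.eqv α
  let b : ι → Set ℕ := fun i => e.symm ⁻¹' B i
  have hb : ∀ s : Finset ι, (⋂ i ∈ s, b i).Infinite := fun s => by
    simpa only [b, Set.preimage_iInter₂] using
      (hB s).preimage (e.symm.surjective.range_eq ▸ Set.subset_univ _)
  have hfip : ∀ F : Finset (Set ℕ), ↑F ⊆ Set.range b → (⋂ A ∈ F, A).Infinite := by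
    intro F hF
    rw [← Set.image_univ, Finset.subset_set_image_iff] at hF
    obtain ⟨s, -, rfl⟩ := hF
    simpa [Finset.set_biInter_finset_image] using hb s
  have hcard : Cardinal.mk (Set.range b) < pseudoIntersectionNumber := by
    have := Cardinal.mk_range_le_lift (f := b)
    rw [Cardinal.lift_uzero] at this
    exact Cardinal.lift_lt.1 (this.trans_lt hι)
  obtain ⟨P, hP, hPb⟩ := exists_pseudoIntersection_of_mk_lt
    (by rintro _ ⟨i, rfl⟩; simpa using hb {i}) hfip hcard
  refine ⟨fun n => e.symm (hP.natEmbedding P n), fun i => ?_⟩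
  rw [← Nat.cofinite_eq_atTop, eventually_cofinite]
  refine ((hPb _ ⟨i, rfl⟩).preimage
    (Subtype.val_injective.comp (hP.natEmbedding P).injective).injOn).subset ?_
  exact fun n hn => ⟨(hP.natEmbedding P n).2, hn⟩

end PseudoIntersection

/-- Rational weights make the blocks a countable set, to which the definition of `𝔭` transfers. -/
structure IsRatBlock (N : ℕ) (p : ℕ →₀ ℚ) : Prop where
  nonneg : ∀ j, 0 ≤ p j
  sum_eq_one : ∑ j ∈ p.support, p j = 1
  le_of_mem_support : ∀ j ∈ p.support, N ≤ j

noncomputable def ratComb {E : Type*} [AddCommMonoid E] [Module ℝ E] (f : ℕ → E)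
    (p : ℕ →₀ ℚ) : E :=
  ∑ j ∈ p.support, (p j : ℝ) • f j

namespace IsRatBlock

variable {N : ℕ} {p : ℕ →₀ ℚ}

theorem mono {M : ℕ} (hp : IsRatBlock N p) (hMN : M ≤ N) : IsRatBlock M p :=
  ⟨hp.nonneg, hp.sum_eq_one, fun j hj => hMN.trans (hp.le_of_mem_support j hj)⟩

theorem sum_cast_eq_one (hp : IsRatBlock N p) : ∑ j ∈ p.support, (p j : ℝ) = 1 := by
  exact_mod_cast hp.sum_eq_one

theorem support_nonempty (hp : IsRatBlock N p) : p.support.Nonempty :=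
  Finset.nonempty_of_sum_ne_zero (hp.sum_eq_one.symm ▸ one_ne_zero)

theorem ratComb_sub {E : Type*} [AddCommGroup E] [Module ℝ E] (hp : IsRatBlock N p)
    (f : ℕ → E) (g : E) : ratComb f p - g = ratComb (fun j => f j - g) p := by
  simp only [ratComb, smul_sub, Finset.sum_sub_distrib, ← Finset.sum_smul, hp.sum_cast_eq_one,
    one_smul]

theorem norm_ratComb_le {E : Type*} [SeminormedAddCommGroup E] [NormedSpace ℝ E]
    (hp : IsRatBlock N p) {f : ℕ → E} {C : ℝ} (hf : ∀ j, ‖f j‖ ≤ C) : ‖ratComb f p‖ ≤ C :=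
  mem_closedBall_zero_iff.1 <| (convex_closedBall 0 C).sum_mem
    (fun j _ => Rat.cast_nonneg.2 (hp.nonneg j)) hp.sum_cast_eq_one
    (fun j _ => mem_closedBall_zero_iff.2 (hf j))

theorem abs_ratComb_le (hp : IsRatBlock N p) (f : ℕ → ℝ) :
    |ratComb f p| ≤ ratComb (fun j => |f j|) p := by
  refine (Finset.abs_sum_le_sum_abs _ _).trans_eq (Finset.sum_congr rfl fun j _ => ?_)
  rw [smul_eq_mul, smul_eq_mul, abs_mul, abs_of_nonneg (Rat.cast_nonneg.2 (hp.nonneg j))]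

theorem infinite_of_forall_exists {S : Set (ℕ →₀ ℚ)}
    (h : ∀ N, ∃ p ∈ S, IsRatBlock N p) : S.Infinite := by
  refine Set.Infinite.of_image (fun p => p.support.sup id)
    (Set.infinite_of_forall_exists_gt fun N => ?_)
  obtain ⟨p, hpS, hp⟩ := h (N + 1)
  obtain ⟨j, hj⟩ := hp.support_nonempty
  exact ⟨_, ⟨p, hpS, rfl⟩, N.lt_succ_self.trans_le
    ((hp.le_of_mem_support j hj).trans (Finset.le_sup (f := id) hj))⟩

end IsRatBlock

theorem ratComb_apply {X : Type*} [NormedAddCommGroup X] [NormedSpace ℝ X]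
    (f : ℕ → StrongDual ℝ X) (p : ℕ →₀ ℚ) (x : X) :
    ratComb f p x = ratComb (fun j => f j x) p := by
  simp [ratComb]

theorem exists_isRatBlock_le_add (s : Finset ℕ) (w : ℕ → ℝ) (hw0 : ∀ i ∈ s, 0 ≤ w i)
    (hw1 : ∑ i ∈ s, w i = 1) {η : ℝ} (hη : 0 < η) :
    ∃ p : ℕ →₀ ℚ, IsRatBlock 0 p ∧ p.support ⊆ s ∧ ∀ i ∈ s, (p i : ℝ) ≤ w i + η := by
  classical
  choose r hr using fun i => exists_rat_btwn (lt_add_of_pos_right (w i) hη)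
  set R := ∑ i ∈ s, r i
  have hR : (1 : ℝ) ≤ R := by
    rw [← hw1]; push_cast [R]; exact Finset.sum_le_sum fun i _ => (hr i).1.le
  have hr0 : ∀ i ∈ s, (0 : ℝ) ≤ r i := fun i hi => (hw0 i hi).trans (hr i).1.le
  let p : ℕ →₀ ℚ := Finsupp.onFinset s (fun i => if i ∈ s then r i / R else 0)
    fun i hi => by by_contra h; simp [h] at hi
  have hps : p.support ⊆ s := Finsupp.support_onFinset_subset
  have hp : ∀ i ∈ s, (p i : ℝ) = r i / R := fun i hi => by simp [p, hi]
  refine ⟨p, ⟨fun i => ?_, ?_, fun _ _ => Nat.zero_le _⟩, hps, fun i hi => ?_⟩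
  · by_cases hi : i ∈ s
    · exact_mod_cast (hp i hi).symm ▸ div_nonneg (hr0 i hi) (zero_le_one.trans hR)
    · simp [p, hi]
  · have : ∑ i ∈ s, (p i : ℝ) = 1 := by
      rw [Finset.sum_congr rfl hp, ← Finset.sum_div,
        div_eq_one_iff_eq (zero_lt_one.trans_le hR).ne']
      push_cast [R]; rfl
    rw [Finset.sum_subset hps fun i _ hi => Finsupp.notMem_support_iff.1 hi]
    exact_mod_cast this
  · rw [hp i hi]
    exact (div_le_self (hr0 i hi) hR).trans (hr i).2.le

def HasSuccessiveSupports (u : ℕ → ℕ →₀ ℚ) : Prop :=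
  ∀ n m, n < m → ∀ j ∈ (u n).support, ∀ j' ∈ (u m).support, j < j'

theorem exists_strictMono_hasSuccessiveSupports {v : ℕ → ℕ →₀ ℚ}
    (hv : ∀ N, ∀ᶠ n in atTop, IsRatBlock N (v n)) :
    ∃ φ : ℕ → ℕ, StrictMono φ ∧ (∀ n, IsRatBlock 0 (v (φ n))) ∧
      HasSuccessiveSupports (v ∘ φ) := by
  have hnext : ∀ m, ∃ k, m < k ∧ IsRatBlock 0 (v k) ∧
      ∀ i ≤ m, ∀ j ∈ (v i).support, ∀ j' ∈ (v k).support, j < j' := by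
    intro m
    set bound := ((Finset.range (m + 1)).biUnion fun i => (v i).support).sup id
    obtain ⟨k, hmk, hk⟩ := ((eventually_gt_atTop m).and (hv (bound + 1))).exists
    refine ⟨k, hmk, hk.mono (Nat.zero_le _), fun i hi j hj j' hj' => ?_⟩
    have hj_le : j ≤ bound := Finset.le_sup (f := id)
      (Finset.mem_biUnion.2 ⟨i, Finset.mem_range.2 (by omega), hj⟩)
    have := hk.le_of_mem_support j' hj'
    omega
  choose ψ hψ using hnext
  have hφ : StrictMono fun n => ψ^[n + 1] 0 := strictMono_nat_of_lt_succ fun n => by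
    rw [Function.iterate_succ_apply' _ (n + 1)]
    exact (hψ _).1
  refine ⟨_, hφ, fun n => ?_, fun n m hnm j hj j' hj' => ?_⟩
  · rw [Function.iterate_succ_apply']
    exact (hψ _).2.1
  · obtain ⟨m, rfl⟩ : ∃ m', m = m' + 1 := ⟨m - 1, by omega⟩
    simp only [Function.comp_apply, Function.iterate_succ_apply' _ (m + 1)] at hj'
    exact (hψ _).2.2 _ (hφ.monotone (by omega : n ≤ m)) j hj j' hj'

theorem isConvexBlock_ratComb {E : Type*} [AddCommGroup E] [Module ℝ E] (f : ℕ → E)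
    {u : ℕ → ℕ →₀ ℚ} (hu : ∀ n, IsRatBlock 0 (u n)) (hsucc : HasSuccessiveSupports u) :
    IsConvexBlock f fun n => ratComb f (u n) := by
  have hdisj : ∀ n m j, j ∈ (u n).support → j ∈ (u m).support → m = n := fun n m j hn hm =>
    by_contra fun hne => ((lt_or_gt_of_ne hne).elim (fun h => hsucc m n h j hm j hn)
      fun h => hsucc n m h j hn j hm).false
  have ha : ∀ n, ∀ j ∈ (u n).support, ∑' m, (u m j : ℝ) = u n j := fun n j hj =>
    tsum_eq_single n fun m hm => by
      rw [Finsupp.notMem_support_iff.1 fun hj' => hm (hdisj n m j hj hj'), Rat.cast_zero]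
  refine ⟨fun n => (u n).support, fun j => ∑' m, (u m j : ℝ), fun n => (hu n).support_nonempty,
    fun n j j' hj hj' => hsucc n (n + 1) n.lt_succ_self j hj j' hj',
    fun j => tsum_nonneg fun m => Rat.cast_nonneg.2 ((hu m).nonneg j), fun n => ?_,
    fun n => Finset.sum_congr rfl fun j hj => by dsimp only; rw [ha n j hj]⟩
  rw [Finset.sum_congr rfl (ha n)]
  exact (hu n).sum_cast_eq_one

namespace ContinuousMap

variable {K : Type*} [TopologicalSpace K] [T2Space K] [CompactSpace K]

open CompactlySupported CompactlySupportedContinuousMap MeasureTheory in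
theorem tendsto_zero_of_positive_functional (Λ : C(K, ℝ) →ₗ[ℝ] ℝ)
    (hΛ : ∀ g, 0 ≤ g → 0 ≤ Λ g) (f : ℕ → C(K, ℝ)) {M : ℝ} (hM : ∀ n x, |f n x| ≤ M)
    (hlim : ∀ x, Tendsto (fun n => f n x) atTop (𝓝 0)) :
    Tendsto (fun n => Λ (f n)) atTop (𝓝 0) := by
  let _ : MeasurableSpace K := borel K
  have : BorelSpace K := ⟨rfl⟩
  let Λc : C_c(K, ℝ) →ₚ[ℝ] ℝ := PositiveLinearMap.mk₀
    { toFun := fun g => Λ (continuousMapEquiv.symm g)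
      map_add' := fun _ _ => map_add Λ _ _
      map_smul' := fun _ _ => map_smul Λ _ _ }
    fun _ hg => hΛ _ hg
  have hint : ∀ n, ∫ x, f n x ∂(RealRMK.rieszMeasure Λc) = Λ (f n) := fun n =>
    RealRMK.integral_rieszMeasure Λc (continuousMapEquiv (f n))
  simpa [hint] using tendsto_integral_of_dominated_convergence (μ := RealRMK.rieszMeasure Λc)
    (fun _ => M)
    (fun n => (f n).continuous.aestronglyMeasurable) (integrable_const M)
    (fun n => .of_forall fun x => (Real.norm_eq_abs _).trans_le (hM n x)) (.of_forall hlim)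

theorem exists_convexCombination_lt (f : ℕ → C(K, ℝ)) {M : ℝ} (hM : ∀ n x, |f n x| ≤ M)
    (hlim : ∀ x, Tendsto (fun n => f n x) atTop (𝓝 0)) {ε : ℝ} (hε : 0 < ε) :
    ∃ (s : Finset ℕ) (w : ℕ → ℝ), (∀ i ∈ s, 0 ≤ w i) ∧ ∑ i ∈ s, w i = 1 ∧
      ∀ x, ∑ i ∈ s, w i * f i x < ε := by
  by_contra! hcon
  set t : Set C(K, ℝ) := {g | ∃ c ∈ convexHull ℝ (Set.range f), c ≤ g}
  have ht : Convex ℝ t := by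
    rintro g₁ ⟨c₁, hc₁, hg₁⟩ g₂ ⟨c₂, hc₂, hg₂⟩ a b ha hb hab
    refine ⟨a • c₁ + b • c₂, convex_convexHull ℝ _ hc₁ hc₂ ha hb hab, le_def.2 fun x => ?_⟩
    have h₁ := le_def.1 hg₁ x
    have h₂ := le_def.1 hg₂ x
    simp only [add_apply, smul_apply, smul_eq_mul]
    nlinarith
  have hdisj : Disjoint (Metric.ball 0 ε) t := by
    refine Set.disjoint_left.2 fun g hg ⟨c, hc, hcg⟩ => ?_
    rw [convexHull_range_eq_exists_affineCombination] at hc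
    obtain ⟨s, w, hw0, hw1, rfl⟩ := hc
    obtain ⟨x, hx⟩ := hcon s w hw0 hw1
    have hcx := le_def.1 hcg x
    rw [Finset.affineCombination_eq_linear_combination s f w hw1] at hcx
    simp only [coe_sum, coe_smul, Finset.sum_apply, Pi.smul_apply, smul_eq_mul] at hcx
    have hgx : g x < ε :=
      ((le_abs_self _).trans (g.norm_coe_le_norm x)).trans_lt (mem_ball_zero_iff.1 hg)
    linarith
  obtain ⟨Λ, u, hΛball, hΛt⟩ :=
    geometric_hahn_banach_open (convex_ball 0 ε) Metric.isOpen_ball ht hdisj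
  have hu : 0 < u := by simpa using hΛball 0 (Metric.mem_ball_self hε)
  have hfu : ∀ n, u ≤ Λ (f n) := fun n => hΛt _ ⟨f n, subset_convexHull ℝ _ ⟨n, rfl⟩, le_rfl⟩
  -- `Λ` is bounded below on `t`, which is stable under adding nonnegative functions
  have hΛpos : ∀ g : C(K, ℝ), 0 ≤ g → 0 ≤ Λ g := by
    intro g hg
    by_contra! hneg
    obtain ⟨n, hn⟩ := exists_nat_gt ((Λ (f 0) - u) / -Λ g)
    have := hΛt (f 0 + (n : ℝ) • g) ⟨f 0, subset_convexHull ℝ _ ⟨0, rfl⟩,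
      le_add_of_nonneg_right (smul_nonneg n.cast_nonneg hg)⟩
    rw [map_add, map_smul, smul_eq_mul] at this
    rw [div_lt_iff₀ (neg_pos.2 hneg)] at hn
    nlinarith
  have hΛlim := tendsto_zero_of_positive_functional Λ.toLinearMap hΛpos f hM hlim
  exact hu.not_ge (ge_of_tendsto' hΛlim hfu)

theorem exists_isRatBlock_ratComb_le (f : ℕ → C(K, ℝ)) {M : ℝ} (hf0 : ∀ n x, 0 ≤ f n x)
    (hfM : ∀ n x, f n x ≤ M) (hlim : ∀ x, Tendsto (fun n => f n x) atTop (𝓝 0)) {ε : ℝ}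
    (hε : 0 < ε) (N : ℕ) : ∃ p, IsRatBlock N p ∧ ∀ x, ratComb (fun j => f j x) p ≤ ε := by
  obtain ⟨s, w, hw0, hw1, hsmall⟩ := exists_convexCombination_lt (fun n => f (n + N))
    (fun n x => abs_le.2 ⟨by linarith [hf0 (n + N) x, hfM (n + N) x], hfM (n + N) x⟩)
    (fun x => (hlim x).comp (tendsto_add_atTop_nat N)) (half_pos hε)
  set s' := s.map (addRightEmbedding N)
  set w' : ℕ → ℝ := fun j => w (j - N)
  have hs' : ∀ j ∈ s', N ≤ j := by simp [s']
  have hw'0 : ∀ j ∈ s', 0 ≤ w' j := by simpa [s', w'] using hw0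
  have hw'1 : ∑ j ∈ s', w' j = 1 := by simpa [s', w'] using hw1
  have hw'small : ∀ x, ∑ j ∈ s', w' j * f j x < ε / 2 := by simpa [s', w'] using hsmall
  set η := ε / (2 * (s'.card * |M| + 1))
  have hη : 0 < η := by positivity
  obtain ⟨p, hp, hps, hpw⟩ := exists_isRatBlock_le_add s' w' hw'0 hw'1 hη
  refine ⟨p, ⟨hp.nonneg, hp.sum_eq_one, fun j hj => hs' j (hps hj)⟩, fun x => ?_⟩
  have hfs' : ∑ j ∈ s', f j x ≤ s'.card * |M| := by
    simpa using Finset.sum_le_card_nsmul s' _ |M| fun j _ => (hfM j x).trans (le_abs_self M)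
  have hηM : η * (s'.card * |M|) ≤ ε / 2 := by
    rw [div_mul_eq_mul_div, div_le_iff₀ (by positivity)]
    nlinarith [mul_nonneg (Nat.cast_nonneg s'.card) (abs_nonneg M)]
  calc ratComb (fun j => f j x) p = ∑ j ∈ s', (p j : ℝ) * f j x :=
        Finset.sum_subset hps fun j _ hj => by simp [Finsupp.notMem_support_iff.1 hj]
    _ ≤ ∑ j ∈ s', (w' j + η) * f j x :=
        Finset.sum_le_sum fun j hj => mul_le_mul_of_nonneg_right (hpw j hj) (hf0 j x)
    _ = ∑ j ∈ s', w' j * f j x + η * ∑ j ∈ s', f j x := by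
        simp only [add_mul, Finset.sum_add_distrib, Finset.mul_sum]
    _ ≤ ε / 2 + η * (s'.card * |M|) :=
        add_le_add (hw'small x).le (mul_le_mul_of_nonneg_left hfs' hη.le)
    _ ≤ ε := by linarith

end ContinuousMap

section WeaklyCompact

variable {X : Type*} [NormedAddCommGroup X] [NormedSpace ℝ X]

theorem IsWeaklyCompact.isBounded {W : Set X} (hW : IsWeaklyCompact W) :
    Bornology.IsBounded W := by
  have hc := hW.image (inclusionInDoubleDualWeak ℝ X).continuous
  obtain ⟨C, hC⟩ := isBounded_iff_forall_norm_le.1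
    (WeakDual.isBounded_iff_isVonNBounded.2 (hc.isVonNBounded (𝕜 := ℝ)))
  refine isBounded_iff_forall_norm_le.2 ⟨C, fun x hx => ?_⟩
  rw [← (inclusionInDoubleDualLi ℝ (E := X)).norm_map x]
  exact hC _ ⟨_, ⟨x, hx, rfl⟩, rfl⟩

theorem IsWeaklyCompact.biUnion {ι : Type*} {s : Set ι} (hs : s.Finite) {W : ι → Set X}
    (hW : ∀ i ∈ s, IsWeaklyCompact (W i)) : IsWeaklyCompact (⋃ i ∈ s, W i) := by
  rw [IsWeaklyCompact, Set.image_iUnion₂]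
  exact hs.isCompact_biUnion hW

theorem exists_isRatBlock_abs_ratComb_le {f : ℕ → StrongDual ℝ X} {C : ℝ}
    (hC : ∀ n, ‖f n‖ ≤ C) (hlim : ∀ x, Tendsto (fun n => f n x) atTop (𝓝 0)) {W : Set X}
    (hW : IsWeaklyCompact W) {ε : ℝ} (hε : 0 < ε) (N : ℕ) :
    ∃ p, IsRatBlock N p ∧ ∀ x ∈ W, |ratComb f p x| ≤ ε := by
  obtain ⟨R, hR⟩ := isBounded_iff_forall_norm_le.1 hW.isBounded
  let K : Set (WeakSpace ℝ X) := toWeakSpace ℝ X '' W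
  have : CompactSpace K := isCompact_iff_compactSpace.1 hW
  let F : ℕ → C(K, ℝ) := fun n =>
    ⟨fun z => |f n ((toWeakSpace ℝ X).symm z)|,
      ((show Continuous fun z : WeakSpace ℝ X => f n ((toWeakSpace ℝ X).symm z) from
        WeakBilin.eval_continuous _ _).comp continuous_subtype_val).abs⟩
  have hFM : ∀ n z, F n z ≤ C * R := by
    rintro n ⟨_, x, hx, rfl⟩
    have hC0 : 0 ≤ C := (norm_nonneg _).trans (hC n)
    simpa [F] using
      ((f n).le_of_opNorm_le (hC n) x).trans (mul_le_mul_of_nonneg_left (hR x hx) hC0)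
  obtain ⟨p, hp, hpF⟩ := ContinuousMap.exists_isRatBlock_ratComb_le F
    (fun n z => abs_nonneg _) hFM (fun z => by simpa [F] using (hlim _).abs) hε N
  refine ⟨p, hp, fun x hx => ?_⟩
  rw [ratComb_apply]
  simpa [F] using (hp.abs_ratComb_le _).trans (hpF ⟨toWeakSpace ℝ X x, x, hx, rfl⟩)

end WeaklyCompact

section StrongGeneration

theorem exists_stronglyGenerates_mk_eq_SG (X : Type*) [NormedAddCommGroup X] [NormedSpace ℝ X] :
    ∃ 𝒢 : Set (Set X), (∀ G ∈ 𝒢, IsWeaklyCompact G) ∧ StronglyGenerates 𝒢 ∧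
      Cardinal.mk 𝒢 = SG X :=
  csInf_mem (s := {c | ∃ 𝒢 : Set (Set X), (∀ G ∈ 𝒢, IsWeaklyCompact G) ∧
      StronglyGenerates 𝒢 ∧ Cardinal.mk 𝒢 = c})
    ⟨_, {G | IsWeaklyCompact G}, fun _ hG => hG,
      fun L hL ε hε => ⟨L, hL, fun x hx => ⟨x, hx, by simpa using hε.le⟩⟩, rfl⟩

variable {X : Type*} [NormedAddCommGroup X] [NormedSpace ℝ X]

theorem StronglyGenerates.nonempty {𝒢 : Set (Set X)} (h𝒢 : StronglyGenerates 𝒢) :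
    𝒢.Nonempty :=
  let ⟨G, hG, _⟩ := h𝒢 ∅ (by simp [IsWeaklyCompact]) 1 one_pos
  ⟨G, hG⟩

theorem StronglyGenerates.mackeyTendsto {𝒢 : Set (Set X)} (h𝒢 : StronglyGenerates 𝒢)
    {y : ℕ → StrongDual ℝ X} {g : StrongDual ℝ X} {C : ℝ} (hC : ∀ n, ‖y n - g‖ ≤ C)
    (hsmall : ∀ G ∈ 𝒢, ∀ ε > 0, ∀ᶠ n in atTop, ∀ x ∈ G, |(y n - g) x| ≤ ε) :
    MackeyTendsto y g := by
  intro L hL ε hε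
  have hC0 : 0 ≤ C := (norm_nonneg _).trans (hC 0)
  obtain ⟨G, hG, hLG⟩ := h𝒢 L hL (ε / (2 * (C + 1))) (by positivity)
  filter_upwards [hsmall G hG (ε / 3) (by positivity)] with n hn x hx
  obtain ⟨z, hz, hxz⟩ := hLG x hx
  have hdiff : |(y n - g) (x - z)| ≤ ε / 2 := by
    calc |(y n - g) (x - z)| ≤ C * (ε / (2 * (C + 1))) :=
          ((y n - g).le_of_opNorm_le (hC n) _).trans (mul_le_mul_of_nonneg_left hxz hC0)
      _ ≤ ε / 2 := by
          rw [mul_div_assoc', div_le_div_iff₀ (by positivity) two_pos]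
          nlinarith
  have hsplit : y n x - g x = (y n - g) z + (y n - g) (x - z) := by
    simp only [sub_apply, map_sub]
    ring
  rw [hsplit]
  linarith [abs_add_le ((y n - g) z) ((y n - g) (x - z)), hn z hz]

end StrongGeneration

section Blocks

variable {X : Type u} [NormedAddCommGroup X] [NormedSpace ℝ X] {𝒢 : Set (Set X)}
  {f : ℕ → StrongDual ℝ X} {C : ℝ}

theorem exists_seq_eventually_isRatBlock_small (h𝒢 : ∀ G ∈ 𝒢, IsWeaklyCompact G)
    (hcard : Cardinal.mk 𝒢 < Cardinal.lift.{u} pseudoIntersectionNumber)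
    (hC : ∀ n, ‖f n‖ ≤ C) (hlim : ∀ x, Tendsto (fun n => f n x) atTop (𝓝 0)) :
    ∃ v : ℕ → ℕ →₀ ℚ, ∀ G ∈ 𝒢, ∀ k : ℕ, ∀ᶠ n in atTop,
      IsRatBlock k (v n) ∧ ∀ x ∈ G, |ratComb f (v n) x| ≤ 1 / (k + 1) := by
  let B : 𝒢 × ℕ → Set (ℕ →₀ ℚ) := fun i =>
    {p | IsRatBlock i.2 p ∧ ∀ x ∈ (i.1 : Set X), |ratComb f p x| ≤ 1 / (i.2 + 1)}
  have hB : ∀ s : Finset (𝒢 × ℕ), (⋂ i ∈ s, B i).Infinite := by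
    intro s
    set k := s.sup Prod.snd
    have hW : IsWeaklyCompact (⋃ i ∈ s, (i.1 : Set X)) :=
      IsWeaklyCompact.biUnion s.finite_toSet fun i _ => h𝒢 _ i.1.2
    refine IsRatBlock.infinite_of_forall_exists fun N => ?_
    obtain ⟨p, hp, hpW⟩ := exists_isRatBlock_abs_ratComb_le hC hlim hW
      (Nat.one_div_pos_of_nat (n := k)) (max N k)
    refine ⟨p, Set.mem_iInter₂.2 fun i hi => ⟨?_, fun x hx => ?_⟩, hp.mono (le_max_left _ _)⟩
    · exact hp.mono ((Finset.le_sup hi).trans (le_max_right _ _))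
    · exact (hpW x (Set.mem_biUnion hi hx)).trans (Nat.one_div_le_one_div (Finset.le_sup hi))
  obtain ⟨v, hv⟩ := exists_seq_eventually_mem_of_mk_lt B hB
    (mk_prod_nat_lt_pseudoIntersectionNumber hcard)
  exact ⟨v, fun G hG k => hv (⟨G, hG⟩, k)⟩

theorem exists_successive_isRatBlock_small (h𝒢ne : 𝒢.Nonempty)
    (h𝒢 : ∀ G ∈ 𝒢, IsWeaklyCompact G)
    (hcard : Cardinal.mk 𝒢 < Cardinal.lift.{u} pseudoIntersectionNumber)
    (hC : ∀ n, ‖f n‖ ≤ C) (hlim : ∀ x, Tendsto (fun n => f n x) atTop (𝓝 0)) :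
    ∃ u : ℕ → ℕ →₀ ℚ, (∀ n, IsRatBlock 0 (u n)) ∧ HasSuccessiveSupports u ∧
      ∀ G ∈ 𝒢, ∀ ε > 0, ∀ᶠ n in atTop, ∀ x ∈ G, |ratComb f (u n) x| ≤ ε := by
  obtain ⟨v, hv⟩ := exists_seq_eventually_isRatBlock_small h𝒢 hcard hC hlim
  obtain ⟨G₀, hG₀⟩ := h𝒢ne
  obtain ⟨φ, hφ, hφblock, hφsucc⟩ := exists_strictMono_hasSuccessiveSupports fun N =>
    (hv G₀ hG₀ N).mono fun _ hn => hn.1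
  refine ⟨v ∘ φ, hφblock, hφsucc, fun G hG ε hε => ?_⟩
  obtain ⟨k, hk⟩ := exists_nat_one_div_lt hε
  exact (hφ.tendsto_atTop.eventually (hv G hG k)).mono fun n hn x hx => (hn.2 x hx).trans hk.le

end Blocks

theorem propertyK_of_SG_lt_p (X : Type u) [NormedAddCommGroup X] [NormedSpace ℝ X]
    [CompleteSpace X] (h : SG X < Cardinal.lift.{u} pseudoIntersectionNumber) : PropertyK X := by
  intro f g hfg
  have hlim : ∀ x, Tendsto (fun n => (f n - g) x) atTop (𝓝 0) := fun x => by
    simpa using (hfg x).sub_const (g x)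
  obtain ⟨C, hC⟩ := banach_steinhaus fun x =>
    let ⟨C, hC⟩ := (hlim x).norm.bddAbove_range
    ⟨C, fun n => hC ⟨n, rfl⟩⟩
  obtain ⟨𝒢, h𝒢, h𝒢gen, h𝒢card⟩ := exists_stronglyGenerates_mk_eq_SG X
  obtain ⟨u, hu, hsucc, hsmall⟩ :=
    exists_successive_isRatBlock_small h𝒢gen.nonempty h𝒢 (h𝒢card ▸ h) hC hlim
  refine ⟨fun n => ratComb f (u n), g, isConvexBlock_ratComb f hu hsucc,
    h𝒢gen.mackeyTendsto (C := C) (fun n => ?_) fun G hG ε hε => ?_⟩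
  · rw [(hu n).ratComb_sub]
    exact (hu n).norm_ratComb_le hC
  · simpa only [(hu _).ratComb_sub] using hsmall G hG ε hε
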